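/- Let T be an operator of the form T = A ⊕ [[B,C],[0,-B]] where A, B are normal and C is a positive injective operator commuting with B. If T is hyponormal, then C = 0 and T is normal. -/

import Mathlib

/-!
A hyponormal operator satisfies `‖T* v‖ ≤ ‖T v‖`. For `T = A ⊕ [[B, C], [0, D]]` and
`v = (0, y, 0)` this reads `‖B* y‖² + ‖C* y‖² ≤ ‖B y‖²`, and normality of `B` gives
`‖B* y‖ = ‖B y‖`, so `C* = 0`. Once `C = 0`, `T = A ⊕ B ⊕ (-B)` is a direct sum of normal
operators, hence normal.
-/

open ContinuousLinearMap

/-- An operator is hyponormal if `T*T - TT*` is positive. -/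
def Hyponormal {H : Type*} [NormedAddCommGroup H] [InnerProductSpace ℂ H] [CompleteSpace H]
    (T : H →L[ℂ] H) : Prop :=
  (star T * T - T * star T).IsPositive

theorem Hyponormal.norm_adjoint_apply_le {H : Type*} [NormedAddCommGroup H]
    [InnerProductSpace ℂ H] [CompleteSpace H] {T : H →L[ℂ] H} (hT : Hyponormal T) (v : H) :
    ‖adjoint T v‖ ≤ ‖T v‖ := by
  have hT_sq : ‖T v‖ ^ 2 = RCLike.re (inner ℂ ((adjoint T * T) v) v) :=
    apply_norm_sq_eq_inner_adjoint_left T v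
  have hT_adj_sq : ‖adjoint T v‖ ^ 2 = RCLike.re (inner ℂ ((T * adjoint T) v) v) := by
    simpa using apply_norm_sq_eq_inner_adjoint_left (adjoint T) v
  have h := hT.re_inner_nonneg_left v
  rw [star_eq_adjoint, sub_apply, inner_sub_left, map_sub, sub_nonneg, ← hT_sq, ← hT_adj_sq] at h
  exact (pow_le_pow_iff_left₀ (norm_nonneg _) (norm_nonneg _) two_ne_zero).mp h

section Triple

variable {H₁ H₂ : Type*}

def triple (x : H₁) (y z : H₂) : WithLp 2 (H₁ × WithLp 2 (H₂ × H₂)) :=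
  WithLp.toLp 2 (x, WithLp.toLp 2 (y, z))

theorem triple_fst_snd (w : WithLp 2 (H₁ × WithLp 2 (H₂ × H₂))) :
    triple w.fst w.snd.fst w.snd.snd = w :=
  rfl

variable [NormedAddCommGroup H₁] [NormedAddCommGroup H₂]

theorem norm_triple_sq (x : H₁) (y z : H₂) :
    ‖triple x y z‖ ^ 2 = ‖x‖ ^ 2 + ‖y‖ ^ 2 + ‖z‖ ^ 2 := by
  simp only [triple, WithLp.prod_norm_sq_eq_of_L2, WithLp.toLp_fst, WithLp.toLp_snd, add_assoc]

variable [InnerProductSpace ℂ H₁] [InnerProductSpace ℂ H₂]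

theorem inner_triple (x x' : H₁) (y y' z z' : H₂) :
    inner ℂ (triple x y z) (triple x' y' z') = inner ℂ x x' + inner ℂ y y' + inner ℂ z z' := by
  simp only [triple, WithLp.prod_inner_apply, add_assoc]

variable [CompleteSpace H₁] [CompleteSpace H₂] {A : H₁ →L[ℂ] H₁} {B C D : H₂ →L[ℂ] H₂}
  {T : WithLp 2 (H₁ × WithLp 2 (H₂ × H₂)) →L[ℂ] WithLp 2 (H₁ × WithLp 2 (H₂ × H₂))}

theorem adjoint_apply_triple
    (hT : ∀ x y z, T (triple x y z) = triple (A x) (B y + C z) (D z)) (x : H₁) (y z : H₂) :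
    adjoint T (triple x y z) = triple (adjoint A x) (adjoint B y) (adjoint C y + adjoint D z) := by
  refine ext_inner_right ℂ fun w => ?_
  rw [← triple_fst_snd w, adjoint_inner_left, hT, inner_triple, inner_triple, inner_add_left,
    inner_add_right, adjoint_inner_left, adjoint_inner_left, adjoint_inner_left,
    adjoint_inner_left]
  ring

theorem offDiagonal_eq_zero_of_hyponormal
    (hT : ∀ x y z, T (triple x y z) = triple (A x) (B y + C z) (D z))
    (hB : IsStarNormal B) (hhypo : Hyponormal T) : C = 0 := by
  suffices hC : ∀ y, adjoint C y = 0 by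
    rw [← adjoint_adjoint C, show adjoint C = 0 from ext hC, map_zero]
  intro y
  have hle := hhypo.norm_adjoint_apply_le (triple 0 y 0)
  rw [adjoint_apply_triple hT, hT] at hle
  have hsq := pow_le_pow_left₀ (norm_nonneg _) hle 2
  simp only [norm_triple_sq, map_zero, add_zero, norm_zero,
    ← isStarNormal_iff_norm_eq_adjoint.mp hB y] at hsq
  have hCy : ‖adjoint C y‖ ^ 2 ≤ 0 := by linarith
  exact norm_eq_zero.mp (pow_eq_zero_iff two_ne_zero |>.mp (le_antisymm hCy (by positivity)))

theorem isStarNormal_of_diagonal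
    (hT : ∀ x y z, T (triple x y z) = triple (A x) (B y) (D z))
    (hA : IsStarNormal A) (hB : IsStarNormal B) (hD : IsStarNormal D) : IsStarNormal T := by
  have hT' : ∀ x y z, T (triple x y z) = triple (A x) (B y + (0 : H₂ →L[ℂ] H₂) z) (D z) := by
    simpa only [zero_apply, add_zero] using hT
  refine isStarNormal_iff_norm_eq_adjoint.mpr fun w => ?_
  rw [← triple_fst_snd w, hT, adjoint_apply_triple hT', map_zero, zero_apply, zero_add,
    ← sq_eq_sq₀ (norm_nonneg _) (norm_nonneg _), norm_triple_sq, norm_triple_sq,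
    isStarNormal_iff_norm_eq_adjoint.mp hA, isStarNormal_iff_norm_eq_adjoint.mp hB,
    isStarNormal_iff_norm_eq_adjoint.mp hD]

end Triple

theorem hyponormal_sqrt_normal_is_normal
    {H₁ H₂ : Type*} [NormedAddCommGroup H₁] [InnerProductSpace ℂ H₁] [CompleteSpace H₁]
    [NormedAddCommGroup H₂] [InnerProductSpace ℂ H₂] [CompleteSpace H₂]
    (A : H₁ →L[ℂ] H₁) (B C : H₂ →L[ℂ] H₂)
    (hA : IsStarNormal A) (hB : IsStarNormal B)
    (T : WithLp 2 (H₁ × WithLp 2 (H₂ × H₂)) →L[ℂ] WithLp 2 (H₁ × WithLp 2 (H₂ × H₂)))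
    (hT : ∀ (x : H₁) (y z : H₂),
      T ((WithLp.equiv 2 (H₁ × WithLp 2 (H₂ × H₂))).symm
          (x, (WithLp.equiv 2 (H₂ × H₂)).symm (y, z))) =
        (WithLp.equiv 2 (H₁ × WithLp 2 (H₂ × H₂))).symm
          (A x, (WithLp.equiv 2 (H₂ × H₂)).symm (B y + C z, -(B z))))
    (hhypo : Hyponormal T) :
    C = 0 ∧ IsStarNormal T := by
  have hT' : ∀ x y z, T (triple x y z) = triple (A x) (B y + C z) ((-B) z) := hT
  obtain rfl : C = 0 := offDiagonal_eq_zero_of_hyponormal hT' hB hhypo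
  refine ⟨rfl, isStarNormal_of_diagonal (fun x y z => ?_) hA hB hB.neg⟩
  simpa only [zero_apply, add_zero] using hT' x y z
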